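/- Let λ > 0, γ > 1, and let A be a d×d real symmetric matrix whose smallest eigenvalue is strictly greater than 1/(γ−1). Then the function f : ℝ^d → ℝ defined by f(θ) = (1/2)·θ'Aθ + Σ_{i=1}^d p^{SCAD}_{λ,γ}(|θ_i|) is strictly convex on ℝ^d. -/

import Mathlib

/-!
Put `μ = 1/(γ-1)` and `g(u) = p(u) + μu²/2`. Then
`f(θ) = ½ θ'(A - μI)θ + Σᵢ g(|θᵢ|)`, and `A - μI` is positive definite, so the quadratic part is
strictly convex. Completing squares on each branch of the SCAD penalty gives the global formula
`g(u) = (γλu - λ²/2 + ((λ-u)⁺)²/2 + ((u-γλ)⁺)²/2)/(γ-1)`, so `g` is convex on `ℝ`. Finally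
`p(-u) = -λu ≤ 0 ≤ p(u)` for `u ≥ 0`, hence `g(|u|) = max (g u) (g (-u))` is convex as well.
-/

open Matrix

/-- The SCAD (smoothly clipped absolute deviation) penalty: `p(u) = λu` for
`0 ≤ u ≤ λ`, `p(u) = (γλu − 0.5(u² + λ²))/(γ−1)` for `λ < u ≤ γλ`, and
`p(u) = λ²(γ²−1)/(2(γ−1))` for `u > γλ`. -/
noncomputable def scadPenalty (lam γ : ℝ) (u : ℝ) : ℝ :=
  if u ≤ lam then lam * u
  else if u ≤ γ * lam then (γ * lam * u - 0.5 * (u ^ 2 + lam ^ 2)) / (γ - 1)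
  else lam ^ 2 * (γ ^ 2 - 1) / (2 * (γ - 1))

open Set

theorem ConvexOn.sq_max_zero {𝕜 E : Type*} [CommRing 𝕜] [LinearOrder 𝕜] [IsStrictOrderedRing 𝕜]
    [AddCommGroup E] [Module 𝕜 E] {f : E → 𝕜} {s : Set E} (hf : ConvexOn 𝕜 s f) :
    ConvexOn 𝕜 s fun x => max 0 (f x) ^ 2 :=
  ((convexOn_const 0 hf.1).sup hf).pow (fun _ _ => le_sup_left) 2

theorem convexOn_univ_affine (a b : ℝ) : ConvexOn ℝ univ fun x : ℝ => a * x + b :=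
  ((LinearMap.mul ℝ ℝ a).convexOn convex_univ).add_const b

theorem ConvexOn.comp_abs_of_apply_neg_le {g : ℝ → ℝ} (hg : ConvexOn ℝ univ g)
    (hneg : ∀ u, 0 ≤ u → g (-u) ≤ g u) : ConvexOn ℝ univ fun u => g |u| := by
  refine (hg.sup (hg.comp_linearMap (-LinearMap.id))).congr fun u _ => ?_
  rcases le_total 0 u with hu | hu
  · simp [abs_of_nonneg hu, hneg u hu]
  · simpa [abs_of_nonpos hu] using hneg (-u) (neg_nonneg.2 hu)

theorem ConvexOn.sum_comp_apply {ι : Type*} [Fintype ι] {g : ℝ → ℝ} (hg : ConvexOn ℝ univ g) :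
    ConvexOn ℝ univ fun x : ι → ℝ => ∑ i, g (x i) :=
  ⟨convex_univ, fun x _ y _ a b ha hb hab => by
    simp only [Pi.add_apply, Pi.smul_apply, smul_eq_mul, Finset.mul_sum, ← Finset.sum_add_distrib]
    exact Finset.sum_le_sum fun i _ => hg.2 trivial trivial ha hb hab⟩

open scoped ComplexOrder Pointwise in
theorem Matrix.IsHermitian.posDef_sub_smul_one {n 𝕜 : Type*} [Fintype n] [DecidableEq n]
    [RCLike 𝕜] {A : Matrix n n 𝕜} (hA : A.IsHermitian) {μ : ℝ} (h : ∀ i, μ < hA.eigenvalues i) :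
    (A - μ • 1).PosDef := by
  have hB : (A - μ • 1).IsHermitian := hA.sub (isHermitian_one.smul (IsSelfAdjoint.all μ))
  refine hB.posDef_iff_eigenvalues_pos.2 fun i => ?_
  have hspec : spectrum ℝ (A - μ • 1) = Set.range hA.eigenvalues - ({μ} : Set ℝ) := by
    rw [← Algebra.algebraMap_eq_smul_one, ← spectrum.sub_singleton_eq,
      hA.spectrum_real_eq_range_eigenvalues]
  obtain ⟨_, ⟨j, rfl⟩, _, rfl, hj⟩ := hspec ▸ hB.eigenvalues_mem_spectrum_real i
  exact hj ▸ sub_pos.2 (h j)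

theorem Matrix.PosDef.strictConvexOn_dotProduct_mulVec {n : Type*} [Fintype n]
    {B : Matrix n n ℝ} (hB : B.PosDef) :
    StrictConvexOn ℝ univ fun x => x ⬝ᵥ B *ᵥ x := by
  refine ⟨convex_univ, fun x _ y _ hxy a b ha hb hab => ?_⟩
  have hpos := hB.dotProduct_mulVec_pos (sub_ne_zero.2 hxy)
  rw [star_trivial] at hpos
  have hgap : a * (x ⬝ᵥ B *ᵥ x) + b * (y ⬝ᵥ B *ᵥ y) - (a • x + b • y) ⬝ᵥ B *ᵥ (a • x + b • y)
      = a * b * ((x - y) ⬝ᵥ B *ᵥ (x - y)) := by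
    obtain rfl : b = 1 - a := by linarith
    simp only [mulVec_add, mulVec_sub, mulVec_smul, dotProduct_add, dotProduct_sub, add_dotProduct,
      sub_dotProduct, dotProduct_smul, smul_dotProduct, smul_eq_mul]
    ring
  simp only [smul_eq_mul]
  nlinarith [mul_pos (mul_pos ha hb) hpos]

section Scad

variable {lam γ : ℝ}

theorem scadPenalty_of_le {u : ℝ} (hu : u ≤ lam) : scadPenalty lam γ u = lam * u := if_pos hu

theorem scadPenalty_nonneg (hlam : 0 ≤ lam) (hγ : 1 < γ) {u : ℝ} (hu : 0 ≤ u) :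
    0 ≤ scadPenalty lam γ u := by
  have hγ1 : 0 < γ - 1 := sub_pos.2 hγ
  unfold scadPenalty
  split_ifs with h₁ h₂
  · positivity
  · exact div_nonneg (by nlinarith) hγ1.le
  · exact div_nonneg (mul_nonneg (sq_nonneg _) (by nlinarith)) (by positivity)

theorem scadPenalty_add_sq_eq (hlam : 0 ≤ lam) (hγ : 1 < γ) (u : ℝ) :
    scadPenalty lam γ u + u ^ 2 / (2 * (γ - 1)) =
      (γ * lam * u - lam ^ 2 / 2 + max 0 (lam - u) ^ 2 / 2 + max 0 (u - γ * lam) ^ 2 / 2) /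
        (γ - 1) := by
  have hγ1 : γ - 1 ≠ 0 := (sub_pos.2 hγ).ne'
  have hlg : lam ≤ γ * lam := le_mul_of_one_le_left hlam hγ.le
  unfold scadPenalty
  split_ifs with h₁ h₂
  · rw [max_eq_right (by linarith), max_eq_left (by linarith)]
    field_simp; ring
  · rw [max_eq_left (by linarith), max_eq_left (by linarith)]
    field_simp; ring
  · rw [max_eq_left (by linarith), max_eq_right (by linarith)]
    field_simp; ring

theorem convexOn_scadPenalty_add_sq (hlam : 0 ≤ lam) (hγ : 1 < γ) :
    ConvexOn ℝ univ fun u => scadPenalty lam γ u + u ^ 2 / (2 * (γ - 1)) := by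
  have hc : 0 ≤ (2 * (γ - 1))⁻¹ := by have := sub_pos.2 hγ; positivity
  have h := ((convexOn_univ_affine (γ * lam / (γ - 1)) (-lam ^ 2 / (2 * (γ - 1)))).add
    ((convexOn_univ_affine (-1) lam).sq_max_zero.smul hc)).add
    ((convexOn_univ_affine 1 (-(γ * lam))).sq_max_zero.smul hc)
  refine h.congr fun u _ => ?_
  simp only [Pi.add_apply, smul_eq_mul, neg_one_mul, one_mul, neg_add_eq_sub, ← sub_eq_add_neg,
    scadPenalty_add_sq_eq hlam hγ]
  field_simp
  ring

theorem convexOn_scadPenalty_abs_add_sq (hlam : 0 ≤ lam) (hγ : 1 < γ) :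
    ConvexOn ℝ univ fun u => scadPenalty lam γ |u| + u ^ 2 / (2 * (γ - 1)) := by
  refine ((convexOn_scadPenalty_add_sq hlam hγ).comp_abs_of_apply_neg_le fun u hu => ?_).congr
    fun u _ => by simp only [sq_abs]
  have hneg : scadPenalty lam γ (-u) ≤ 0 := by
    rw [scadPenalty_of_le (by linarith)]
    nlinarith
  simpa using hneg.trans (scadPenalty_nonneg hlam hγ hu)

end Scad

/-- If `λ > 0`, `γ > 1` and `A` is a `d×d` real symmetric matrix
whose smallest eigenvalue exceeds `1/(γ−1)`, then
`θ ↦ (1/2)θ'Aθ + Σᵢ p^{SCAD}_{λ,γ}(|θᵢ|)` is strictly convex on `ℝ^d`. -/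
theorem scad_penalized_quadratic_strictly_convex
    (lam γ : ℝ) (hlam : 0 < lam) (hγ : 1 < γ)
    {d : ℕ} (A : Matrix (Fin d) (Fin d) ℝ)
    (hA : A.IsHermitian)
    (heig : ∀ i, 1 / (γ - 1) < hA.eigenvalues i) :
    StrictConvexOn ℝ (Set.univ : Set (Fin d → ℝ))
      (fun θ : Fin d → ℝ =>
        (1 / 2) * (θ ⬝ᵥ A.mulVec θ) + ∑ i, scadPenalty lam γ |θ i|) := by
  have hquad :=
    ((hA.posDef_sub_smul_one heig).smul (one_half_pos (α := ℝ))).strictConvexOn_dotProduct_mulVec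
  have hpen := (convexOn_scadPenalty_abs_add_sq hlam.le hγ).sum_comp_apply (ι := Fin d)
  refine (hquad.add_convexOn hpen).congr fun θ _ => ?_
  have hγ1 : γ - 1 ≠ 0 := (sub_pos.2 hγ).ne'
  have hself : θ ⬝ᵥ θ = ∑ i, θ i ^ 2 := by simp only [dotProduct, sq]
  simp only [Pi.add_apply, smul_mulVec, sub_mulVec, one_mulVec, dotProduct_smul, dotProduct_sub,
    smul_eq_mul, Finset.sum_add_distrib, ← Finset.sum_div, hself]
  field_simp
  ring
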